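/- The rectification operator 𝚎̄_c admits the following equivalent description: define M^c(D,r) = #{(s,c+1) ∈ D : s ≥ r} − #{(s,c) ∈ D : s ≥ r} and M^c(D) = max_r M^c(D,r). If M^c(D) ≤ 0 then 𝚎̄_c(D) = 0; otherwise letting r be the largest row index with M^c(D,r) = M^c(D), 𝚎̄_c(D) pushes the cell at (r, c+1) left to (r, c). This agrees with the definition of 𝚎̄_c via horizontal c-pairing: the largest row index achieving the maximum of M^c(D,·) equals the row of the lowest horizontally unpaired box in column c+1. -/

import Mathlib

open scoped Classical

/-- A Kohnert move: take the rightmost cell of row `r` and move it down in its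
column to the highest open row `r'` below (rows indexed from 1). Cells are `(row, column)`. -/
def KohnertMove (D D' : Finset (ℕ × ℕ)) : Prop :=
  ∃ r c r', (r, c) ∈ D ∧ (∀ c', (r, c') ∈ D → c' ≤ c) ∧
    1 ≤ r' ∧ r' < r ∧ (r', c) ∉ D ∧ (∀ r'', r' < r'' → r'' < r → (r'', c) ∈ D) ∧
    D' = insert (r', c) (D.erase (r, c))

/-- The largest part of a weak composition. -/
def maxPart (a : List ℕ) : ℕ := a.foldr max 0

/-- Number of cells of a diagram in row `i`. -/
def rowWeight (D : Finset (ℕ × ℕ)) (i : ℕ) : ℕ :=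
  (D.filter (fun p => p.1 = i)).card

/-- The weight of a diagram, as a finitely supported function recording the
number of cells in each row. -/
noncomputable def wtF (D : Finset (ℕ × ℕ)) : ℕ →₀ ℕ := ∑ p ∈ D, Finsupp.single p.1 1

/-- The exponent vector `x^a` of a weak composition `a` (1-based variables). -/
noncomputable def compFinsupp (a : List ℕ) : ℕ →₀ ℕ :=
  ∑ i ∈ Finset.range a.length, Finsupp.single (i + 1) (a.getD i 0)

/-- The boxes matched by a partial matching. -/
def matchedBoxes (M : Finset ((ℕ × ℕ) × (ℕ × ℕ))) : Finset (ℕ × ℕ) :=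
  M.image Prod.fst ∪ M.image Prod.snd

/-- Initial vertical `i`-pairing: pair any boxes of rows `i` and `i+1` in the
same column. -/
def vInit (i : ℕ) (D : Finset (ℕ × ℕ)) : Finset ((ℕ × ℕ) × (ℕ × ℕ)) :=
  (D.filter (fun p => p.1 = i + 1 ∧ (i, p.2) ∈ D)).image (fun p => (p, (i, p.2)))

/-- One step of the iterative vertical `i`-pairing: pair an unpaired box of row
`i+1` with the rightmost unpaired box of row `i` in a column to its left,
provided all boxes of rows `i`, `i+1` in the columns strictly between them are
already paired. -/
def VStep (i : ℕ) (D : Finset (ℕ × ℕ)) (M M' : Finset ((ℕ × ℕ) × (ℕ × ℕ))) : Prop :=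
  ∃ cx cy, (i + 1, cx) ∈ D ∧ (i, cy) ∈ D ∧ cy < cx ∧
    (i + 1, cx) ∉ matchedBoxes M ∧ (i, cy) ∉ matchedBoxes M ∧
    (∀ p ∈ D, (p.1 = i ∨ p.1 = i + 1) → cy < p.2 → p.2 < cx → p ∈ matchedBoxes M) ∧
    M' = insert ((i + 1, cx), (i, cy)) M

/-- The vertical `i`-pairing of `D`: a matching obtained from the same-column
pairing by iterating `VStep` until no further step applies. -/
def VOutcome (i : ℕ) (D : Finset (ℕ × ℕ)) (M : Finset ((ℕ × ℕ) × (ℕ × ℕ))) : Prop :=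
  Relation.ReflTransGen (VStep i D) (vInit i D) M ∧ ∀ M', ¬ VStep i D M M'

/-- The raising operator `e_i` as a relation: `RaiseRel i D D'` holds when `D'`
is obtained from `D` by pushing the rightmost vertically unpaired box of row
`i+1` down to row `i` (`e_i(D) = 0` corresponds to no `D'` existing). -/
def RaiseRel (i : ℕ) (D D' : Finset (ℕ × ℕ)) : Prop :=
  ∃ M c, VOutcome i D M ∧ (i + 1, c) ∈ D ∧ (i + 1, c) ∉ matchedBoxes M ∧
    (∀ c', (i + 1, c') ∈ D → (i + 1, c') ∉ matchedBoxes M → c' ≤ c) ∧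
    D' = insert (i, c) (D.erase (i + 1, c))

/-- Initial horizontal `c`-pairing: pair any boxes of columns `c` and `c+1` in
the same row. Cells are `(row, column)`. -/
def hInit (c : ℕ) (D : Finset (ℕ × ℕ)) : Finset ((ℕ × ℕ) × (ℕ × ℕ)) :=
  (D.filter (fun p => p.2 = c + 1 ∧ (p.1, c) ∈ D)).image (fun p => (p, (p.1, c)))

/-- One step of the iterative horizontal `c`-pairing: pair an unpaired box of
column `c+1` with the lowest unpaired box of column `c` in a row above it,
provided all boxes of columns `c`, `c+1` in the rows strictly between them are
already paired. -/
def HStep (c : ℕ) (D : Finset (ℕ × ℕ)) (M M' : Finset ((ℕ × ℕ) × (ℕ × ℕ))) : Prop :=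
  ∃ rx ry, (rx, c + 1) ∈ D ∧ (ry, c) ∈ D ∧ rx < ry ∧
    (rx, c + 1) ∉ matchedBoxes M ∧ (ry, c) ∉ matchedBoxes M ∧
    (∀ p ∈ D, (p.2 = c ∨ p.2 = c + 1) → rx < p.1 → p.1 < ry → p ∈ matchedBoxes M) ∧
    M' = insert ((rx, c + 1), (ry, c)) M

/-- The horizontal `c`-pairing of `D`. -/
def HOutcome (c : ℕ) (D : Finset (ℕ × ℕ)) (M : Finset ((ℕ × ℕ) × (ℕ × ℕ))) : Prop :=
  Relation.ReflTransGen (HStep c D) (hInit c D) M ∧ ∀ M', ¬ HStep c D M M'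

/-- The rectification operator `𝚎̄_c` as a relation: `RectRel c D D'` holds when
`D'` is obtained from `D` by pushing the bottom-most horizontally unpaired box
of column `c+1` left to column `c` (`𝚎̄_c(D) = 0` corresponds to no `D'`). -/
def RectRel (c : ℕ) (D D' : Finset (ℕ × ℕ)) : Prop :=
  ∃ M r, HOutcome c D M ∧ (r, c + 1) ∈ D ∧ (r, c + 1) ∉ matchedBoxes M ∧
    (∀ r', (r', c + 1) ∈ D → (r', c + 1) ∉ matchedBoxes M → r ≤ r') ∧
    D' = insert (r, c) (D.erase (r, c + 1))

/-- `M^c(D, r) = #{(s, c+1) ∈ D : s ≥ r} − #{(s, c) ∈ D : s ≥ r}`. -/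
def Mfun (c : ℕ) (D : Finset (ℕ × ℕ)) (r : ℕ) : ℤ :=
  ((D.filter (fun p => p.2 = c + 1 ∧ r ≤ p.1)).card : ℤ) -
    ((D.filter (fun p => p.2 = c ∧ r ≤ p.1)).card : ℤ)

/-- The `M`-based description of the rectification operator: push the cell of
column `c+1` at the largest row `r₀` where `M^c(D, ·)` attains its (positive)
maximum, left to column `c`. -/
def MRectRel (c : ℕ) (D D' : Finset (ℕ × ℕ)) : Prop :=
  ∃ r₀, 0 < Mfun c D r₀ ∧ (∀ r, Mfun c D r ≤ Mfun c D r₀) ∧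
    (∀ r, r₀ < r → Mfun c D r < Mfun c D r₀) ∧
    (r₀, c + 1) ∈ D ∧ D' = insert (r₀, c) (D.erase (r₀, c + 1))

/-!
Every horizontal pair joins a box of column `c+1` to a box of column `c` in a row at least as
high, so in rows `≥ r` the paired boxes of column `c+1` are at most as many as the boxes of
column `c`; hence `M^c(D, r)` is at most the number of unpaired boxes of column `c+1` in rows
`≥ r`. At the row `r₀` of the lowest unpaired box of column `c+1` this is an equality: a finished
pairing leaves every unpaired box of column `c` below every unpaired box of column `c+1`, and no
pair straddles row `r₀`. So `M^c(D, ·)` attains its maximum, the number of all unpaired boxes of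
column `c+1`, at `r₀`, and is strictly smaller in every row above `r₀`.
-/

def IsLastMax {α β : Type*} [LinearOrder α] [Preorder β] (f : α → β) (a : α) : Prop :=
  (∀ b, f b ≤ f a) ∧ ∀ b, a < b → f b < f a

theorem IsLastMax.unique {α β : Type*} [LinearOrder α] [Preorder β] {f : α → β} {a b : α}
    (ha : IsLastMax f a) (hb : IsLastMax f b) : a = b := by
  rcases lt_trichotomy a b with h | h | h
  · exact absurd (hb.1 a) (ha.2 b h).not_ge
  · exact h
  · exact absurd (ha.1 b) (hb.2 a h).not_ge

section

open Finset

variable {c : ℕ} {D : Finset (ℕ × ℕ)} {M M' : Finset ((ℕ × ℕ) × (ℕ × ℕ))}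

theorem fst_mem_matchedBoxes {q : (ℕ × ℕ) × (ℕ × ℕ)} (h : q ∈ M) : q.1 ∈ matchedBoxes M :=
  mem_union_left _ (mem_image_of_mem _ h)

theorem snd_mem_matchedBoxes {q : (ℕ × ℕ) × (ℕ × ℕ)} (h : q ∈ M) : q.2 ∈ matchedBoxes M :=
  mem_union_right _ (mem_image_of_mem _ h)

theorem matchedBoxes_mono (h : M ⊆ M') : matchedBoxes M ⊆ matchedBoxes M' :=
  union_subset_union (image_subset_image h) (image_subset_image h)

theorem mem_hInit {q : (ℕ × ℕ) × (ℕ × ℕ)} :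
    q ∈ hInit c D ↔ ∃ r, (r, c + 1) ∈ D ∧ (r, c) ∈ D ∧ q = ((r, c + 1), (r, c)) := by
  simp only [hInit, mem_image, mem_filter]
  constructor
  · rintro ⟨⟨r, j⟩, ⟨hD, rfl, hc⟩, rfl⟩
    exact ⟨r, hD, hc, rfl⟩
  · rintro ⟨r, h1, h2, rfl⟩
    exact ⟨(r, c + 1), ⟨h1, rfl, h2⟩, rfl⟩

/-- The invariant of the horizontal `c`-pairing process. -/
structure IsHPairing (c : ℕ) (D : Finset (ℕ × ℕ)) (M : Finset ((ℕ × ℕ) × (ℕ × ℕ))) :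
    Prop where
  hInit_subset : hInit c D ⊆ M
  fst_mem : ∀ q ∈ M, q.1 ∈ D
  snd_mem : ∀ q ∈ M, q.2 ∈ D
  fst_col : ∀ q ∈ M, q.1.2 = c + 1
  snd_col : ∀ q ∈ M, q.2.2 = c
  row_le : ∀ q ∈ M, q.1.1 ≤ q.2.1
  between_matched : ∀ q ∈ M, ∀ p ∈ D, (p.2 = c ∨ p.2 = c + 1) → q.1.1 < p.1 → p.1 < q.2.1 →
    p ∈ matchedBoxes M
  injOn_fst : Set.InjOn Prod.fst (M : Set ((ℕ × ℕ) × (ℕ × ℕ)))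
  injOn_snd : Set.InjOn Prod.snd (M : Set ((ℕ × ℕ) × (ℕ × ℕ)))

theorem isHPairing_hInit (c : ℕ) (D : Finset (ℕ × ℕ)) : IsHPairing c D (hInit c D) where
  hInit_subset := Subset.refl _
  fst_mem q hq := by obtain ⟨r, h, -, rfl⟩ := mem_hInit.1 hq; exact h
  snd_mem q hq := by obtain ⟨r, -, h, rfl⟩ := mem_hInit.1 hq; exact h
  fst_col q hq := by obtain ⟨r, -, -, rfl⟩ := mem_hInit.1 hq; rfl
  snd_col q hq := by obtain ⟨r, -, -, rfl⟩ := mem_hInit.1 hq; rfl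
  row_le q hq := by obtain ⟨r, -, -, rfl⟩ := mem_hInit.1 hq; exact le_rfl
  between_matched q hq p _ _ h₁ h₂ := by
    obtain ⟨r, -, -, rfl⟩ := mem_hInit.1 hq
    exact absurd (h₁.trans h₂) (lt_irrefl r)
  injOn_fst q hq q' hq' h := by
    obtain ⟨r, -, -, rfl⟩ := mem_hInit.1 hq
    obtain ⟨r', -, -, rfl⟩ := mem_hInit.1 hq'
    simp_all
  injOn_snd q hq q' hq' h := by
    obtain ⟨r, -, -, rfl⟩ := mem_hInit.1 hq
    obtain ⟨r', -, -, rfl⟩ := mem_hInit.1 hq'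
    simp_all

theorem IsHPairing.hStep (hI : IsHPairing c D M) (h : HStep c D M M') : IsHPairing c D M' := by
  obtain ⟨rx, ry, hx, hy, hlt, hxu, hyu, hbetween, rfl⟩ := h
  have hsub : M ⊆ insert ((rx, c + 1), (ry, c)) M := subset_insert _ _
  have hnew : ((rx, c + 1), (ry, c)) ∉ (M : Set ((ℕ × ℕ) × (ℕ × ℕ))) :=
    fun hq => hxu (fst_mem_matchedBoxes hq)
  refine ⟨hI.hInit_subset.trans hsub, ?_, ?_, ?_, ?_, ?_, ?_, ?_, ?_⟩
  · exact (forall_mem_insert _ _ _).2 ⟨hx, hI.fst_mem⟩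
  · exact (forall_mem_insert _ _ _).2 ⟨hy, hI.snd_mem⟩
  · exact (forall_mem_insert _ _ _).2 ⟨rfl, hI.fst_col⟩
  · exact (forall_mem_insert _ _ _).2 ⟨rfl, hI.snd_col⟩
  · exact (forall_mem_insert _ _ _).2 ⟨hlt.le, hI.row_le⟩
  · intro q hq p hp hcol h₁ h₂
    rcases mem_insert.1 hq with rfl | hq
    · exact matchedBoxes_mono hsub (hbetween p hp hcol h₁ h₂)
    · exact matchedBoxes_mono hsub (hI.between_matched q hq p hp hcol h₁ h₂)
  · rw [coe_insert, Set.injOn_insert hnew]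
    exact ⟨hI.injOn_fst, fun ⟨q, hq, he⟩ => hxu (he ▸ fst_mem_matchedBoxes hq :
      ((rx, c + 1), (ry, c)).1 ∈ matchedBoxes M)⟩
  · rw [coe_insert, Set.injOn_insert hnew]
    exact ⟨hI.injOn_snd, fun ⟨q, hq, he⟩ => hyu (he ▸ snd_mem_matchedBoxes hq :
      ((rx, c + 1), (ry, c)).2 ∈ matchedBoxes M)⟩

theorem IsHPairing.of_reflTransGen (h : Relation.ReflTransGen (HStep c D) (hInit c D) M) :
    IsHPairing c D M := by
  induction h with
  | refl => exact isHPairing_hInit c D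
  | tail _ hstep ih => exact ih.hStep hstep

theorem HOutcome.isHPairing (hO : HOutcome c D M) : IsHPairing c D M :=
  .of_reflTransGen hO.1

theorem IsHPairing.subset_product (hI : IsHPairing c D M) : M ⊆ D ×ˢ D :=
  fun q hq => mem_product.2 ⟨hI.fst_mem q hq, hI.snd_mem q hq⟩

theorem HStep.card_lt (h : HStep c D M M') : M.card < M'.card := by
  obtain ⟨rx, ry, -, -, -, hxu, -, -, rfl⟩ := h
  exact card_lt_card (ssubset_insert fun hq => hxu (fst_mem_matchedBoxes hq))

/-- The pairing process terminates, since every step adds a pair of cells of `D`. -/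
theorem exists_hOutcome (c : ℕ) (D : Finset (ℕ × ℕ)) : ∃ M, HOutcome c D M := by
  set S := (D ×ˢ D).powerset.filter (Relation.ReflTransGen (HStep c D) (hInit c D))
  have mem_S {M} (h : Relation.ReflTransGen (HStep c D) (hInit c D) M) : M ∈ S :=
    mem_filter.2 ⟨mem_powerset.2 (IsHPairing.of_reflTransGen h).subset_product, h⟩
  obtain ⟨M, hMS, hmax⟩ := S.exists_max_image card ⟨_, mem_S .refl⟩
  have hreach := (mem_filter.1 hMS).2
  exact ⟨M, hreach, fun M' hstep => (hmax M' (mem_S (hreach.tail hstep))).not_gt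
    hstep.card_lt⟩

theorem IsHPairing.same_row_matched (hI : IsHPairing c D M) {r : ℕ} (hc : (r, c) ∈ D)
    (hc' : (r, c + 1) ∈ D) : (r, c + 1) ∈ matchedBoxes M :=
  fst_mem_matchedBoxes (hI.hInit_subset (mem_hInit.2 ⟨r, hc', hc, rfl⟩))

theorem IsHPairing.row_le_fst_of_unmatched (hI : IsHPairing c D M) {r : ℕ}
    (hr : (r, c + 1) ∈ D) (hru : (r, c + 1) ∉ matchedBoxes M) {q : (ℕ × ℕ) × (ℕ × ℕ)}
    (hq : q ∈ M) (hle : r ≤ q.2.1) : r ≤ q.1.1 := by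
  by_contra! hlt
  obtain hlt' | heq := hle.lt_or_eq
  · exact hru (hI.between_matched q hq _ hr (Or.inr rfl) hlt hlt')
  · have hq2 : q.2 = (r, c) := Prod.ext heq.symm (hI.snd_col q hq)
    exact hru (hI.same_row_matched (hq2 ▸ hI.snd_mem q hq) hr)

theorem HOutcome.row_lt_of_unmatched (hO : HOutcome c D M) {rx ry : ℕ}
    (hx : (rx, c + 1) ∈ D) (hxu : (rx, c + 1) ∉ matchedBoxes M)
    (hy : (ry, c) ∈ D) (hyu : (ry, c) ∉ matchedBoxes M) : ry < rx := by
  induction hn : ry - rx using Nat.strong_induction_on generalizing rx ry with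
  | _ n ih =>
  by_contra! hle
  obtain hlt | rfl := hle.lt_or_eq
  swap
  · exact hxu (hO.isHPairing.same_row_matched hy hx)
  -- the step pairing `(rx, c+1)` with `(ry, c)` is blocked by an unpaired box in between
  obtain ⟨⟨r, j⟩, hp, hcol, h₁, h₂, hpu⟩ : ∃ p ∈ D, (p.2 = c ∨ p.2 = c + 1) ∧ rx < p.1 ∧
      p.1 < ry ∧ p ∉ matchedBoxes M := by
    by_contra! hall
    exact hO.2 _ ⟨rx, ry, hx, hy, hlt, hxu, hyu, hall, rfl⟩
  rcases hcol with rfl | rfl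
  · exact (ih (r - rx) (by omega) hx hxu hp hpu rfl).not_gt h₁
  · exact (ih (ry - r) (by omega) hp hpu hy hyu rfl).not_gt h₂

def colFrom (D : Finset (ℕ × ℕ)) (j r : ℕ) : Finset (ℕ × ℕ) :=
  D.filter (fun p => p.2 = j ∧ r ≤ p.1)

def unmatchedFrom (c : ℕ) (D : Finset (ℕ × ℕ)) (M : Finset ((ℕ × ℕ) × (ℕ × ℕ))) (r : ℕ) :
    Finset (ℕ × ℕ) :=
  (colFrom D (c + 1) r).filter (· ∉ matchedBoxes M)

theorem mem_colFrom {j r : ℕ} {p : ℕ × ℕ} : p ∈ colFrom D j r ↔ p ∈ D ∧ p.2 = j ∧ r ≤ p.1 :=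
  mem_filter

theorem mem_unmatchedFrom {r : ℕ} {p : ℕ × ℕ} :
    p ∈ unmatchedFrom c D M r ↔ (p ∈ D ∧ p.2 = c + 1 ∧ r ≤ p.1) ∧ p ∉ matchedBoxes M := by
  rw [unmatchedFrom, mem_filter, mem_colFrom]

theorem Mfun_eq_card_colFrom (c : ℕ) (D : Finset (ℕ × ℕ)) (r : ℕ) :
    Mfun c D r = ((colFrom D (c + 1) r).card : ℤ) - (colFrom D c r).card :=
  rfl

theorem IsHPairing.card_colFrom_succ (hI : IsHPairing c D M) (r : ℕ) :
    (colFrom D (c + 1) r).card = (M.filter (r ≤ ·.1.1)).card + (unmatchedFrom c D M r).card := by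
  have hmatched : (colFrom D (c + 1) r).filter (· ∈ matchedBoxes M) =
      (M.filter (r ≤ ·.1.1)).image Prod.fst := by
    ext p
    simp only [colFrom, mem_filter, mem_image]
    constructor
    · rintro ⟨⟨-, hpc, hpr⟩, hpM⟩
      rcases mem_union.1 hpM with hpM | hpM <;> obtain ⟨q, hq, rfl⟩ := mem_image.1 hpM
      · exact ⟨q, ⟨hq, hpr⟩, rfl⟩
      · exact absurd (hpc.symm.trans (hI.snd_col q hq)) (by omega)
    · rintro ⟨q, ⟨hq, hqr⟩, rfl⟩
      exact ⟨⟨hI.fst_mem q hq, hI.fst_col q hq, hqr⟩, fst_mem_matchedBoxes hq⟩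
  rw [← card_filter_add_card_filter_not (· ∈ matchedBoxes M), hmatched,
    card_image_of_injOn (hI.injOn_fst.mono (coe_subset.2 (filter_subset _ _)))]
  rfl

theorem IsHPairing.card_filter_le_card_colFrom (hI : IsHPairing c D M) (r : ℕ) :
    (M.filter (r ≤ ·.1.1)).card ≤ (colFrom D c r).card := by
  refine card_le_card_of_injOn Prod.snd (fun q hq => ?_)
    (hI.injOn_snd.mono (coe_subset.2 (filter_subset _ _)))
  obtain ⟨hqM, hqr⟩ := mem_filter.1 hq
  exact mem_filter.2 ⟨hI.snd_mem q hqM, hI.snd_col q hqM, hqr.trans (hI.row_le q hqM)⟩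

theorem HOutcome.card_colFrom_le_card_filter (hO : HOutcome c D M) {r : ℕ}
    (hr : (r, c + 1) ∈ D) (hru : (r, c + 1) ∉ matchedBoxes M) :
    (colFrom D c r).card ≤ (M.filter (r ≤ ·.1.1)).card := by
  have hI := hO.isHPairing
  refine (card_le_card (t := (M.filter (r ≤ ·.1.1)).image Prod.snd) fun p hp => ?_).trans
    card_image_le
  obtain ⟨hpD, hpc, hpr⟩ := mem_filter.1 hp
  obtain ⟨s, j⟩ := p
  subst hpc
  have hpM : (s, j) ∈ matchedBoxes M := by
    by_contra hpu
    exact (hO.row_lt_of_unmatched hr hru hpD hpu).not_ge hpr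
  rcases mem_union.1 hpM with hpM | hpM <;> obtain ⟨q, hq, hqp⟩ := mem_image.1 hpM
  · exact absurd ((hI.fst_col q hq).symm.trans (congrArg Prod.snd hqp)) (by omega)
  · refine mem_image.2 ⟨q, mem_filter.2 ⟨hq, hI.row_le_fst_of_unmatched hr hru hq ?_⟩, hqp⟩
    rw [hqp]
    exact hpr

theorem IsHPairing.Mfun_le_card_unmatchedFrom (hI : IsHPairing c D M) (r : ℕ) :
    Mfun c D r ≤ (unmatchedFrom c D M r).card := by
  have h₁ := hI.card_colFrom_succ r
  have h₂ := hI.card_filter_le_card_colFrom r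
  rw [Mfun_eq_card_colFrom]
  omega

theorem HOutcome.Mfun_eq_card_unmatchedFrom (hO : HOutcome c D M) {r : ℕ}
    (hr : (r, c + 1) ∈ D) (hru : (r, c + 1) ∉ matchedBoxes M) :
    Mfun c D r = (unmatchedFrom c D M r).card := by
  have hI := hO.isHPairing
  have h₁ := hI.card_colFrom_succ r
  have h₂ := hI.card_filter_le_card_colFrom r
  have h₃ := hO.card_colFrom_le_card_filter hr hru
  rw [Mfun_eq_card_colFrom]
  omega

def IsLowestUnmatched (c : ℕ) (D : Finset (ℕ × ℕ)) (M : Finset ((ℕ × ℕ) × (ℕ × ℕ)))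
    (r : ℕ) : Prop :=
  (r, c + 1) ∈ D ∧ (r, c + 1) ∉ matchedBoxes M ∧
    ∀ r', (r', c + 1) ∈ D → (r', c + 1) ∉ matchedBoxes M → r ≤ r'

theorem IsHPairing.exists_isLowestUnmatched (hI : IsHPairing c D M) {r : ℕ}
    (hpos : 0 < Mfun c D r) : ∃ r₀, IsLowestUnmatched c D M r₀ := by
  obtain ⟨⟨s, j⟩, hp⟩ : (unmatchedFrom c D M r).Nonempty := by
    have := hI.Mfun_le_card_unmatchedFrom r
    exact card_pos.1 (by omega)
  obtain ⟨⟨hpD, rfl, -⟩, hpu⟩ := mem_unmatchedFrom.1 hp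
  have hex : ∃ r₀, (r₀, c + 1) ∈ D ∧ (r₀, c + 1) ∉ matchedBoxes M := ⟨s, hpD, hpu⟩
  exact ⟨Nat.find hex, (Nat.find_spec hex).1, (Nat.find_spec hex).2,
    fun r' h h' => Nat.find_min' hex ⟨h, h'⟩⟩

theorem HOutcome.isLastMax_Mfun (hO : HOutcome c D M) {r : ℕ}
    (hlow : IsLowestUnmatched c D M r) : 0 < Mfun c D r ∧ IsLastMax (Mfun c D) r := by
  obtain ⟨hr, hru, hmin⟩ := hlow
  have hI := hO.isHPairing
  have hMr := hO.Mfun_eq_card_unmatchedFrom hr hru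
  have hrmem : (r, c + 1) ∈ unmatchedFrom c D M r :=
    mem_unmatchedFrom.2 ⟨⟨hr, rfl, le_rfl⟩, hru⟩
  have hsub (s : ℕ) : unmatchedFrom c D M s ⊆ unmatchedFrom c D M r := by
    rintro ⟨s', j⟩ hp
    obtain ⟨⟨hpD, rfl, -⟩, hpu⟩ := mem_unmatchedFrom.1 hp
    exact mem_unmatchedFrom.2 ⟨⟨hpD, rfl, hmin _ hpD hpu⟩, hpu⟩
  refine ⟨hMr ▸ by exact_mod_cast card_pos.2 ⟨_, hrmem⟩, fun s => ?_, fun s hs => ?_⟩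
  · calc Mfun c D s ≤ (unmatchedFrom c D M s).card := hI.Mfun_le_card_unmatchedFrom s
      _ ≤ (unmatchedFrom c D M r).card := by exact_mod_cast card_le_card (hsub s)
      _ = Mfun c D r := hMr.symm
  · have hssub : unmatchedFrom c D M s ⊂ unmatchedFrom c D M r :=
      ssubset_of_subset_of_ne (hsub s) fun he => by
        have := (mem_unmatchedFrom.1 (he ▸ hrmem)).1.2.2
        omega
    calc Mfun c D s ≤ (unmatchedFrom c D M s).card := hI.Mfun_le_card_unmatchedFrom s
      _ < (unmatchedFrom c D M r).card := by exact_mod_cast card_lt_card hssub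
      _ = Mfun c D r := hMr.symm

end

theorem rect_eq_M_description_general (c : ℕ) (D : Finset (ℕ × ℕ)) :
    ((∃ D', RectRel c D D') ↔ ∃ r, 0 < Mfun c D r) ∧
    (∀ D', RectRel c D D' ↔ MRectRel c D D') ∧
    (∀ M x, HOutcome c D M → x ∈ D → x.2 = c + 1 → x ∉ matchedBoxes M →
      (∀ y ∈ D, y.2 = c + 1 → y ∉ matchedBoxes M → x.1 ≤ y.1) →
      (∀ r, Mfun c D r ≤ Mfun c D x.1) ∧ ∀ r, x.1 < r → Mfun c D r < Mfun c D x.1) := by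
  refine ⟨⟨?_, ?_⟩, fun D' => ⟨?_, ?_⟩, ?_⟩
  · rintro ⟨D', M, r, hO, hr, hru, hmin, -⟩
    exact ⟨r, (hO.isLastMax_Mfun ⟨hr, hru, hmin⟩).1⟩
  · rintro ⟨r, hpos⟩
    obtain ⟨M, hO⟩ := exists_hOutcome c D
    obtain ⟨r₀, hr₀, hru₀, hmin₀⟩ := hO.isHPairing.exists_isLowestUnmatched hpos
    exact ⟨_, M, r₀, hO, hr₀, hru₀, hmin₀, rfl⟩
  · rintro ⟨M, r, hO, hr, hru, hmin, rfl⟩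
    obtain ⟨hpos, hmax, hlast⟩ := hO.isLastMax_Mfun ⟨hr, hru, hmin⟩
    exact ⟨r, hpos, hmax, hlast, hr, rfl⟩
  · rintro ⟨r, hpos, hmax, hlast, -, rfl⟩
    obtain ⟨M, hO⟩ := exists_hOutcome c D
    obtain ⟨r₀, hlow⟩ := hO.isHPairing.exists_isLowestUnmatched hpos
    obtain rfl : r₀ = r := (hO.isLastMax_Mfun hlow).2.unique ⟨hmax, hlast⟩
    exact ⟨M, r₀, hO, hlow.1, hlow.2.1, hlow.2.2, rfl⟩
  · rintro M ⟨r, j⟩ hO hx rfl hxu hmin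
    exact (hO.isLastMax_Mfun ⟨hx, hxu, fun r' h h' => hmin _ h rfl h'⟩).2

/-- The pairing-based and `M`-based descriptions of `𝚎̄_c` agree: `𝚎̄_c(D) ≠ 0`
iff `M^c(D) > 0`; the two operators coincide; and the row of the lowest
horizontally unpaired box of column `c+1` is the largest row where `M^c(D, ·)`
attains its maximum. -/
theorem rect_eq_M_description (c : ℕ) (hc : 1 ≤ c) (D : Finset (ℕ × ℕ)) :
    ((∃ D', RectRel c D D') ↔ ∃ r, 0 < Mfun c D r) ∧
    (∀ D', RectRel c D D' ↔ MRectRel c D D') ∧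
    (∀ M x, HOutcome c D M → x ∈ D → x.2 = c + 1 → x ∉ matchedBoxes M →
      (∀ y ∈ D, y.2 = c + 1 → y ∉ matchedBoxes M → x.1 ≤ y.1) →
      (∀ r, Mfun c D r ≤ Mfun c D x.1) ∧ ∀ r, x.1 < r → Mfun c D r < Mfun c D x.1) :=
  rect_eq_M_description_general c D
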